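/- arXiv:math/0210076 — 2 statements merged into one kernel-verified Lean document; each statement's English description precedes it below -/
import Mathlib

section
/- Let H₁₆ ⊆ 𝔽₂¹⁶ be the extended Hamming code of length 16, i.e., the dual of the code spanned by the all-ones vector together with the four vectors v_j (j = 0,1,2,3) where (v_j)_i equals the j-th binary digit of i. Then the supports of the weight-4 codewords of H₁₆ form a Steiner system S(3,4,16): every 3-element subset of the 16 coordinates is contained in the support of exactly one weight-4 codeword. -/
/-! Identify the coordinates with `𝔽₂⁴` through their binary digits, so that addition of
points is `^^^`. A binary vector with support `S` lies in `H₁₆` iff `|S|` is even and every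
bit plane meets `S` in an even number of points; for four distinct points `x, a, b, e` the bit
conditions say exactly `x = a ^^^ b ^^^ e`. So the unique block through three distinct points
`a, b, e` is `{a, b, e, a ^^^ b ^^^ e}`, and the fourth point differs from the other three since
`^^^` is a group law of exponent two. -/

/-- The first-order Reed–Muller code generators of length 16: the all-ones vector and the
four coordinate-bit vectors. -/
def rm14Gens : Set (Fin 16 → ZMod 2) :=
  {fun _ => 1} ∪ Set.range (fun (j : Fin 4) (i : Fin 16) =>
    if Nat.testBit i.val j.val then 1 else 0)

/-- The extended Hamming code of length 16: the dual of the code spanned by the all-ones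
vector and the four coordinate-bit vectors. -/
def ham16 : Set (Fin 16 → ZMod 2) :=
  {c | ∀ d ∈ Submodule.span (ZMod 2) rm14Gens, ∑ i, c i * d i = 0}

open Finset

lemma xor_xor_ne_of_ne {α : Type*} [XorOp α] [Zero α] [LawfulXor α] {a b c : α}
    (hab : a ≠ b) (hac : a ≠ c) (hbc : b ≠ c) :
    a ^^^ (b ^^^ c) ≠ a ∧ a ^^^ (b ^^^ c) ≠ b ∧ a ^^^ (b ^^^ c) ≠ c := by
  refine ⟨by simpa using hbc, ?_, ?_⟩
  · rw [← xor_assoc, xor_comm a b, xor_assoc]; simpa using hac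
  · rw [← xor_assoc]; simpa using hab

lemma Fin.eq_iff_forall_testBit_eq {k : ℕ} {x y : Fin (2 ^ k)} :
    x = y ↔ ∀ j : Fin k, x.val.testBit j = y.val.testBit j := by
  refine ⟨by rintro rfl _; rfl, fun h => Fin.ext (Nat.eq_of_testBit_eq fun j => ?_)⟩
  by_cases hj : j < k
  · exact h ⟨j, hj⟩
  · have hle : 2 ^ k ≤ 2 ^ j := Nat.pow_le_pow_right two_pos (not_lt.mp hj)
    rw [Nat.testBit_lt_two_pow (x.isLt.trans_le hle), Nat.testBit_lt_two_pow (y.isLt.trans_le hle)]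

lemma forall_mem_span_dotProduct_eq_zero_iff {R ι : Type*} [CommSemiring R] [Fintype ι]
    {G : Set (ι → R)} {c : ι → R} :
    (∀ d ∈ Submodule.span R G, c ⬝ᵥ d = 0) ↔ ∀ d ∈ G, c ⬝ᵥ d = 0 := by
  simpa [SetLike.le_def, Set.subset_def] using
    Submodule.span_le (p := LinearMap.ker (dotProductBilin R R c)) (s := G)

lemma boole_sum_four_eq_zero_iff (p q r s : Bool) :
    ((if p then 1 else 0) + (if q then 1 else 0) + (if r then 1 else 0) +
      (if s then 1 else 0) : ZMod 2) = 0 ↔ p = (q ^^ (r ^^ s)) := by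
  revert p q r s; decide

section charVec

variable {ι : Type*} [DecidableEq ι]

def charVec (S : Finset ι) : ι → ZMod 2 := fun i => if i ∈ S then 1 else 0

variable [Fintype ι]

lemma filter_charVec_ne_zero (S : Finset ι) : ({i | charVec S i ≠ 0} : Finset ι) = S := by
  ext i; simp [charVec]

lemma charVec_filter_ne_zero (c : ι → ZMod 2) : charVec ({i | c i ≠ 0} : Finset ι) = c := by
  funext i
  simp only [charVec, mem_filter, mem_univ, true_and]
  generalize c i = t
  revert t; decide

lemma charVec_dotProduct (S : Finset ι) (d : ι → ZMod 2) :
    charVec S ⬝ᵥ d = ∑ i ∈ S, d i := by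
  simp [dotProduct, charVec]

end charVec

lemma charVec_mem_ham16_iff (S : Finset (Fin 16)) :
    charVec S ∈ ham16 ↔ (#S : ZMod 2) = 0 ∧
      ∀ j : Fin 4, ∑ i ∈ S, (if i.val.testBit j then 1 else 0 : ZMod 2) = 0 := by
  change (∀ d ∈ Submodule.span _ _, charVec S ⬝ᵥ d = 0) ↔ _
  rw [forall_mem_span_dotProduct_eq_zero_iff]
  simp only [rm14Gens, Set.singleton_union, Set.mem_insert_iff, Set.mem_range, forall_eq_or_imp,
    forall_exists_index, forall_apply_eq_imp_iff, charVec_dotProduct, sum_const, nsmul_eq_mul,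
    mul_one]

lemma charVec_insert_mem_ham16_iff {x a b e : Fin 16} (hx : x ∉ ({a, b, e} : Finset _))
    (hab : a ≠ b) (hae : a ≠ e) (hbe : b ≠ e) :
    charVec (insert x {a, b, e}) ∈ ham16 ↔ x = a ^^^ (b ^^^ e) := by
  have hsum (f : Fin 16 → ZMod 2) :
      ∑ i ∈ insert x {a, b, e}, f i = f x + f a + f b + f e := by
    rw [sum_insert hx, sum_insert (by simp [hab, hae]), sum_insert (by simp [hbe]),
      sum_singleton]
    ring
  rw [charVec_mem_ham16_iff, card_insert_of_notMem hx,
    card_eq_three.mpr ⟨a, b, e, hab, hae, hbe, rfl⟩]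
  simp only [hsum, boole_sum_four_eq_zero_iff, Fin.eq_iff_forall_testBit_eq (k := 4),
    Fin.xor_val_of_two_pow (w := 4), Nat.testBit_xor]
  exact and_iff_right (by decide)

/-- The supports of the weight-4 codewords of the extended Hamming code `H₁₆` form a
Steiner system `S(3,4,16)`: every 3-element set of coordinates is contained in the support
of exactly one weight-4 codeword. -/
theorem stmt7 (T : Finset (Fin 16)) (hT : T.card = 3) :
    ∃! c : Fin 16 → ZMod 2, c ∈ ham16 ∧
      (Finset.univ.filter fun i => c i ≠ 0).card = 4 ∧
      ∀ i ∈ T, c i ≠ 0 := by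
  obtain ⟨a, b, e, hab, hae, hbe, rfl⟩ := card_eq_three.mp hT
  -- `LawfulXor` is only registered for `Fin (2 ^ w)`, which `Fin 16` unfolds to.
  obtain ⟨hxa, hxb, hxe⟩ := xor_xor_ne_of_ne (α := Fin (2 ^ 4)) hab hae hbe
  have hxT : a ^^^ (b ^^^ e) ∉ ({a, b, e} : Finset (Fin 16)) := by simp [hxa, hxb, hxe]
  refine ⟨charVec (insert (a ^^^ (b ^^^ e)) {a, b, e}),
    ⟨(charVec_insert_mem_ham16_iff hxT hab hae hbe).2 rfl, ?_, ?_⟩, ?_⟩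
  · rw [filter_charVec_ne_zero, card_insert_of_notMem hxT, hT]
  · intro i hi
    simp [charVec, mem_insert_of_mem hi]
  · rintro c ⟨hc, hw, hTc⟩
    obtain ⟨y, hyT, hy⟩ := (exists_eq_insert_iff (s := {a, b, e}) (t := {i | c i ≠ 0})).mpr
      ⟨fun i hi => by simpa using hTc i hi, by rw [hT, hw]⟩
    rw [← charVec_filter_ne_zero c, ← hy] at hc ⊢
    rw [(charVec_insert_mem_ham16_iff hyT hab hae hbe).1 hc]
end

section
/- Every codeword of the extended Hamming code H₁₆ ⊆ 𝔽₂¹⁶ is a sum of codewords of Hamming weight 4; that is, H₁₆ is spanned over 𝔽₂ by its weight-4 codewords. -/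
lemma sum16 (v : Fin 16 → ZMod 2) : ∑ i, v i =
    v 0 + (v 1 + (v 2 + (v 3 + (v 4 + (v 5 + (v 6 + (v 7 + (v 8 + (v 9 +
      (v 10 + (v 11 + (v 12 + (v 13 + (v 14 + v 15)))))))))))))) := by
  simp only [Fin.sum_univ_succ, Fin.sum_univ_zero, add_zero]
  rfl

lemma ext16 (u v : Fin 16 → ZMod 2) (h0 : u 0 = v 0) (h1 : u 1 = v 1) (h2 : u 2 = v 2)
    (h3 : u 3 = v 3) (h4 : u 4 = v 4) (h5 : u 5 = v 5) (h6 : u 6 = v 6) (h7 : u 7 = v 7)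
    (h8 : u 8 = v 8) (h9 : u 9 = v 9) (h10 : u 10 = v 10) (h11 : u 11 = v 11)
    (h12 : u 12 = v 12) (h13 : u 13 = v 13) (h14 : u 14 = v 14) (h15 : u 15 = v 15) :
    u = v := by
  funext i; fin_cases i <;> assumption

def V3 : Fin 16 → ZMod 2 := fun i => if i = 0 ∨ i = 1 ∨ i = 2 ∨ i = 3 then 1 else 0
def V5 : Fin 16 → ZMod 2 := fun i => if i = 0 ∨ i = 1 ∨ i = 4 ∨ i = 5 then 1 else 0
def V6 : Fin 16 → ZMod 2 := fun i => if i = 0 ∨ i = 2 ∨ i = 4 ∨ i = 6 then 1 else 0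
def V7 : Fin 16 → ZMod 2 := fun i => if i = 1 ∨ i = 2 ∨ i = 4 ∨ i = 7 then 1 else 0
def V9 : Fin 16 → ZMod 2 := fun i => if i = 0 ∨ i = 1 ∨ i = 8 ∨ i = 9 then 1 else 0
def V10 : Fin 16 → ZMod 2 := fun i => if i = 0 ∨ i = 2 ∨ i = 8 ∨ i = 10 then 1 else 0
def V11 : Fin 16 → ZMod 2 := fun i => if i = 1 ∨ i = 2 ∨ i = 8 ∨ i = 11 then 1 else 0
def V12 : Fin 16 → ZMod 2 := fun i => if i = 0 ∨ i = 4 ∨ i = 8 ∨ i = 12 then 1 else 0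
def V13 : Fin 16 → ZMod 2 := fun i => if i = 1 ∨ i = 4 ∨ i = 8 ∨ i = 13 then 1 else 0
def V14 : Fin 16 → ZMod 2 := fun i => if i = 2 ∨ i = 4 ∨ i = 8 ∨ i = 14 then 1 else 0
def V15 : Fin 16 → ZMod 2 := fun i => if i = 3 ∨ i = 4 ∨ i = 8 ∨ i = 15 then 1 else 0

lemma mem_ham16_of (v : Fin 16 → ZMod 2)
    (h : ∀ g ∈ rm14Gens, ∑ i, v i * g i = 0) : v ∈ ham16 := by
  intro d hd
  induction hd using Submodule.span_induction with
  | mem g hg => exact h g hg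
  | zero => simp
  | add x y _ _ hx hy => simp [mul_add, Finset.sum_add_distrib, hx, hy]
  | smul a x _ hx =>
      simp only [Pi.smul_apply, smul_eq_mul, mul_left_comm, ← Finset.mul_sum, hx, mul_zero]

def wt4 : Set (Fin 16 → ZMod 2) :=
  {v : Fin 16 → ZMod 2 | v ∈ ham16 ∧ (Finset.univ.filter fun i => v i ≠ 0).card = 4}

lemma mem_wt4 (v : Fin 16 → ZMod 2)
    (h : ∀ g ∈ rm14Gens, ∑ i, v i * g i = 0)
    (hw : (Finset.univ.filter fun i => v i ≠ 0).card = 4) : v ∈ wt4 :=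
  ⟨mem_ham16_of v h, hw⟩

lemma V3_mem : V3 ∈ wt4 := by
  refine mem_wt4 _ ?_ (by decide); rintro g (rfl | ⟨j, rfl⟩)
  · decide
  · fin_cases j <;> decide

lemma V5_mem : V5 ∈ wt4 := by
  refine mem_wt4 _ ?_ (by decide); rintro g (rfl | ⟨j, rfl⟩)
  · decide
  · fin_cases j <;> decide

lemma V6_mem : V6 ∈ wt4 := by
  refine mem_wt4 _ ?_ (by decide); rintro g (rfl | ⟨j, rfl⟩)
  · decide
  · fin_cases j <;> decide

lemma V7_mem : V7 ∈ wt4 := by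
  refine mem_wt4 _ ?_ (by decide); rintro g (rfl | ⟨j, rfl⟩)
  · decide
  · fin_cases j <;> decide

lemma V9_mem : V9 ∈ wt4 := by
  refine mem_wt4 _ ?_ (by decide); rintro g (rfl | ⟨j, rfl⟩)
  · decide
  · fin_cases j <;> decide

lemma V10_mem : V10 ∈ wt4 := by
  refine mem_wt4 _ ?_ (by decide); rintro g (rfl | ⟨j, rfl⟩)
  · decide
  · fin_cases j <;> decide

lemma V11_mem : V11 ∈ wt4 := by
  refine mem_wt4 _ ?_ (by decide); rintro g (rfl | ⟨j, rfl⟩)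
  · decide
  · fin_cases j <;> decide

lemma V12_mem : V12 ∈ wt4 := by
  refine mem_wt4 _ ?_ (by decide); rintro g (rfl | ⟨j, rfl⟩)
  · decide
  · fin_cases j <;> decide

lemma V13_mem : V13 ∈ wt4 := by
  refine mem_wt4 _ ?_ (by decide); rintro g (rfl | ⟨j, rfl⟩)
  · decide
  · fin_cases j <;> decide

lemma V14_mem : V14 ∈ wt4 := by
  refine mem_wt4 _ ?_ (by decide); rintro g (rfl | ⟨j, rfl⟩)
  · decide
  · fin_cases j <;> decide

lemma V15_mem : V15 ∈ wt4 := by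
  refine mem_wt4 _ ?_ (by decide); rintro g (rfl | ⟨j, rfl⟩)
  · decide
  · fin_cases j <;> decide

/-- `H₁₆` is spanned over `𝔽₂` by its weight-4 codewords. -/
theorem stmt9 (c : Fin 16 → ZMod 2) (hc : c ∈ ham16) :
    c ∈ Submodule.span (ZMod 2)
      {v : Fin 16 → ZMod 2 | v ∈ ham16 ∧
        (Finset.univ.filter fun i => v i ≠ 0).card = 4} := by
  have h1 := hc (fun _ => 1) (Submodule.subset_span (Or.inl rfl))
  have h0 := hc _ (Submodule.subset_span (Or.inr ⟨0, rfl⟩))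
  have hb1 := hc _ (Submodule.subset_span (Or.inr ⟨1, rfl⟩))
  have hb2 := hc _ (Submodule.subset_span (Or.inr ⟨2, rfl⟩))
  have hb3 := hc _ (Submodule.subset_span (Or.inr ⟨3, rfl⟩))
  rw [sum16] at h1 h0 hb1 hb2 hb3
  simp (config := { decide := true }) only [Nat.testBit, mul_one, mul_zero, mul_ite,
    add_zero, zero_add, if_true, if_false] at h1 h0 hb1 hb2 hb3
  have two : (2 : ZMod 2) = 0 := rfl
  have key : c = (c 3 + c 15) • V3 + (c 5 • V5 + (c 6 • V6 + (c 7 • V7 + (c 9 • V9 +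
      (c 10 • V10 + (c 11 • V11 + (c 12 • V12 + (c 13 • V13 + (c 14 • V14 +
      c 15 • V15))))))))) := by
    apply ext16 <;>
      simp (config := { decide := true }) [V3, V5, V6, V7, V9, V10, V11, V12, V13, V14, V15]
    · linear_combination h1 + h0 + hb1 + hb2 + hb3 + (-(c 1 + c 2 + c 4 + c 8) -
        2*(c 3 + c 5 + c 6 + c 7 + c 9 + c 10 + c 11 + c 12 + c 13 + c 14) - 3 * c 15) * two
    · linear_combination h0 - (c 3 + c 5 + c 7 + c 9 + c 11 + c 13 + c 15) * two
    · linear_combination hb1 - (c 3 + c 6 + c 7 + c 10 + c 11 + c 14 + c 15) * two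
    · linear_combination (-(c 15)) * two
    · linear_combination hb2 - (c 5 + c 6 + c 7 + c 12 + c 13 + c 14 + c 15) * two
    · linear_combination hb3 - (c 9 + c 10 + c 11 + c 12 + c 13 + c 14 + c 15) * two
  rw [key]
  refine Submodule.add_mem _ (Submodule.smul_mem _ _ (Submodule.subset_span V3_mem)) ?_
  refine Submodule.add_mem _ (Submodule.smul_mem _ _ (Submodule.subset_span V5_mem)) ?_
  refine Submodule.add_mem _ (Submodule.smul_mem _ _ (Submodule.subset_span V6_mem)) ?_
  refine Submodule.add_mem _ (Submodule.smul_mem _ _ (Submodule.subset_span V7_mem)) ?_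
  refine Submodule.add_mem _ (Submodule.smul_mem _ _ (Submodule.subset_span V9_mem)) ?_
  refine Submodule.add_mem _ (Submodule.smul_mem _ _ (Submodule.subset_span V10_mem)) ?_
  refine Submodule.add_mem _ (Submodule.smul_mem _ _ (Submodule.subset_span V11_mem)) ?_
  refine Submodule.add_mem _ (Submodule.smul_mem _ _ (Submodule.subset_span V12_mem)) ?_
  refine Submodule.add_mem _ (Submodule.smul_mem _ _ (Submodule.subset_span V13_mem)) ?_
  refine Submodule.add_mem _ (Submodule.smul_mem _ _ (Submodule.subset_span V14_mem)) ?_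
  exact Submodule.smul_mem _ _ (Submodule.subset_span V15_mem)
end
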